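/- arXiv:2411.02516 — 2 statements merged into one kernel-verified Lean document; each statement's English description precedes it below -/
import Mathlib

section
/- Let H be a finite rank free abelian group and let RH be a (possibly crossed/twisted) group ring over a ring R with no zero divisors. Then for nonzero x, y ∈ RH, the Newton polytope is multiplicative: P(xy) = P(x) + P(y), where + is Minkowski sum. -/
open scoped Pointwise

/-- Multiplication in a crossed/twisted group ring `R ∗ H` of the free abelian group
`H = ι → ℤ` over `R`, determined by an action `σ` of `H` on `R` by ring automorphisms and a
2-cocycle `τ` with values in the units of `R`:
`(r ∗ g)(r' ∗ h) = r · σ_g(r') · τ(g,h) ∗ (g + h)`. -/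
noncomputable def twistedMul {R : Type*} [Ring R] {ι : Type*}
    (σ : (ι → ℤ) → RingAut R) (τ : (ι → ℤ) → (ι → ℤ) → Rˣ)
    (a b : (ι → ℤ) →₀ R) : (ι → ℤ) →₀ R :=
  a.sum fun g r => b.sum fun h r' => Finsupp.single (g + h) (r * σ g r' * (τ g h : R))

/-- The Newton polytope of a nonzero element `x = Σ x_h h` of the (twisted) group ring:
the convex hull in `H ⊗ ℝ = ι → ℝ` of the support `{h : x_h ≠ 0}`. -/
noncomputable def newtonPolytope {R : Type*} [Ring R] {ι : Type*}
    (x : (ι → ℤ) →₀ R) : Set (ι → ℝ) :=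
  convexHull ℝ ((fun (v : ι → ℤ) (i : ι) => (v i : ℝ)) '' (x.support : Set (ι → ℤ)))

/-!
Every nonzero coefficient of `xy` sits at some `g + h` with `x_g ≠ 0 ≠ y_h`, which gives
`P(xy) ⊆ P(x) + P(y)`. Conversely, a vertex `v` of the polytope `P(x) + P(y)` has a unique
decomposition `v = g₀ + h₀` over the supports, so the coefficient of `xy` at `v` is the single
product `x_{g₀} σ_{g₀}(y_{h₀}) τ(g₀, h₀)`, which is nonzero as `R` has no zero divisors. Hence all
vertices of `P(x) + P(y)` lie in `P(xy)`, and a polytope is the convex hull of its vertices.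
-/

section Convex

variable {𝕜 E : Type*} [Field 𝕜] [LinearOrder 𝕜] [IsStrictOrderedRing 𝕜] [AddCommGroup E]
  [Module 𝕜 E]

theorem eq_and_eq_of_add_eq_of_mem_extremePoints_convexHull_add {s t : Set E} {a₀ a b₀ b : E}
    (ha₀ : a₀ ∈ s) (hb₀ : b₀ ∈ t) (ha : a ∈ s) (hb : b ∈ t)
    (hext : a₀ + b₀ ∈ (convexHull 𝕜 (s + t)).extremePoints 𝕜) (hab : a + b = a₀ + b₀) :
    a = a₀ ∧ b = b₀ := by
  have hmid : midpoint 𝕜 (a + b₀) (a₀ + b) = a₀ + b₀ := by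
    have hsum : a + b₀ + (a₀ + b) = (a + b) + (a₀ + b₀) := by abel
    rw [midpoint_eq_smul_add, hsum, hab, ← two_smul 𝕜, smul_smul, invOf_mul_self, one_smul]
  have hsplit := (mem_extremePoints.1 hext).2 (a + b₀)
    (subset_convexHull 𝕜 _ (Set.add_mem_add ha hb₀)) (a₀ + b)
    (subset_convexHull 𝕜 _ (Set.add_mem_add ha₀ hb)) (hmid ▸ midpoint_mem_openSegment _ _)
  exact ⟨add_right_cancel hsplit.1, add_left_cancel hsplit.2⟩

end Convex

theorem Set.Finite.convexHull_subset_of_extremePoints_subset {E : Type*} [AddCommGroup E]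
    [Module ℝ E] [TopologicalSpace E] [T2Space E] [IsTopologicalAddGroup E] [ContinuousSMul ℝ E]
    [LocallyConvexSpace ℝ E] {s t : Set E} (hs : s.Finite) (ht : t.Finite)
    (h : (convexHull ℝ s).extremePoints ℝ ⊆ t) : convexHull ℝ s ⊆ convexHull ℝ t :=
  calc convexHull ℝ s
      = closure (convexHull ℝ ((convexHull ℝ s).extremePoints ℝ)) :=
        (closure_convexHull_extremePoints (hs.isCompact_convexHull ℝ) (convex_convexHull ℝ s)).symm
    _ ⊆ closure (convexHull ℝ t) := closure_mono (convexHull_mono h)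
    _ = convexHull ℝ t := (ht.isClosed_convexHull ℝ).closure_eq

section TwistedGroupRing

variable {R : Type*} [Ring R] {ι : Type*} (σ : (ι → ℤ) → RingAut R)
  (τ : (ι → ℤ) → (ι → ℤ) → Rˣ) (x y : (ι → ℤ) →₀ R)

theorem twistedMul_apply (v : ι → ℤ) :
    twistedMul σ τ x y v = ∑ g ∈ x.support, ∑ h ∈ y.support,
      Finsupp.single (g + h) (x g * σ g (y h) * (τ g h : R)) v := by
  simp only [twistedMul, Finsupp.sum, Finsupp.finsetSum_apply]

theorem support_twistedMul_subset :
    ((twistedMul σ τ x y).support : Set (ι → ℤ)) ⊆ x.support + y.support := by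
  intro v hv
  by_contra hnv
  refine Finsupp.mem_support_iff.1 hv ?_
  rw [twistedMul_apply]
  exact Finset.sum_eq_zero fun g hg => Finset.sum_eq_zero fun h hh =>
    Finsupp.single_eq_of_ne fun hgh => hnv (hgh ▸ Set.add_mem_add hg hh)

theorem twistedMul_apply_of_unique {g₀ h₀ : ι → ℤ} (hg₀ : g₀ ∈ x.support) (hh₀ : h₀ ∈ y.support)
    (huniq : ∀ g ∈ x.support, ∀ h ∈ y.support, g + h = g₀ + h₀ → g = g₀ ∧ h = h₀) :
    twistedMul σ τ x y (g₀ + h₀) = x g₀ * σ g₀ (y h₀) * (τ g₀ h₀ : R) := by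
  rw [twistedMul_apply, Finset.sum_eq_single_of_mem g₀ hg₀, Finset.sum_eq_single_of_mem h₀ hh₀,
    Finsupp.single_eq_same]
  · exact fun h hh hne => Finsupp.single_eq_of_ne fun hgh => hne (huniq g₀ hg₀ h hh hgh.symm).2
  · exact fun g hg hne => Finset.sum_eq_zero fun h hh =>
      Finsupp.single_eq_of_ne fun hgh => hne (huniq g hg h hh hgh.symm).1

theorem add_mem_support_twistedMul [NoZeroDivisors R] {g₀ h₀ : ι → ℤ} (hg₀ : g₀ ∈ x.support)
    (hh₀ : h₀ ∈ y.support)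
    (huniq : ∀ g ∈ x.support, ∀ h ∈ y.support, g + h = g₀ + h₀ → g = g₀ ∧ h = h₀) :
    g₀ + h₀ ∈ (twistedMul σ τ x y).support := by
  have hx₀ : x g₀ ≠ 0 := Finsupp.mem_support_iff.1 hg₀
  have hσy₀ : σ g₀ (y h₀) ≠ 0 :=
    (map_ne_zero_iff _ (σ g₀).injective).2 (Finsupp.mem_support_iff.1 hh₀)
  have : Nontrivial R := ⟨⟨_, _, hx₀⟩⟩
  rw [Finsupp.mem_support_iff, twistedMul_apply_of_unique σ τ x y hg₀ hh₀ huniq]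
  exact mul_ne_zero (mul_ne_zero hx₀ hσy₀) (τ g₀ h₀).ne_zero

theorem newtonPolytope_eq_convexHull_image :
    newtonPolytope x = convexHull ℝ ((Int.castAddHom ℝ).compLeft ι '' x.support) :=
  rfl

end TwistedGroupRing

theorem newtonPolytope_twistedMul_general {R : Type*} [Ring R] [NoZeroDivisors R]
    {ι : Type*}
    (σ : (ι → ℤ) → RingAut R) (τ : (ι → ℤ) → (ι → ℤ) → Rˣ)
    (x y : (ι → ℤ) →₀ R) :
    newtonPolytope (twistedMul σ τ x y) = newtonPolytope x + newtonPolytope y := by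
  set e := (Int.castAddHom ℝ).compLeft ι
  have he : Function.Injective e := Int.cast_injective.comp_left
  rw [newtonPolytope_eq_convexHull_image, newtonPolytope_eq_convexHull_image,
    newtonPolytope_eq_convexHull_image, ← convexHull_add, ← Set.image_add e]
  refine (convexHull_mono (Set.image_mono (support_twistedMul_subset σ τ x y))).antisymm ?_
  refine (((x.support.finite_toSet.add y.support.finite_toSet).image e)
    |>.convexHull_subset_of_extremePoints_subset (Finset.finite_toSet _ |>.image e)) ?_
  intro v hv
  obtain ⟨_, ⟨g₀, hg₀, h₀, hh₀, rfl⟩, rfl⟩ := extremePoints_convexHull_subset hv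
  refine ⟨g₀ + h₀, add_mem_support_twistedMul σ τ x y hg₀ hh₀ fun g hg h hh hgh => ?_, rfl⟩
  rw [Set.image_add e, map_add e] at hv
  have hdecomp := eq_and_eq_of_add_eq_of_mem_extremePoints_convexHull_add
    (Set.mem_image_of_mem e hg₀) (Set.mem_image_of_mem e hh₀) (Set.mem_image_of_mem e hg)
    (Set.mem_image_of_mem e hh) hv (by rw [← map_add, hgh, map_add])
  exact ⟨he hdecomp.1, he hdecomp.2⟩

/-- If `R` has no zero divisors, then for nonzero elements `x, y` of the twisted group ring
of a finite rank free abelian group `H` over `R`, the Newton polytope is multiplicative: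
`P(xy) = P(x) + P(y)` (Minkowski sum). -/
theorem newtonPolytope_twistedMul {R : Type*} [Ring R] [NoZeroDivisors R]
    {ι : Type*} [Fintype ι]
    (σ : (ι → ℤ) → RingAut R) (τ : (ι → ℤ) → (ι → ℤ) → Rˣ)
    (x y : (ι → ℤ) →₀ R) (hx : x ≠ 0) (hy : y ≠ 0) :
    newtonPolytope (twistedMul σ τ x y) = newtonPolytope x + newtonPolytope y :=
  newtonPolytope_twistedMul_general σ τ x y
end

section
/- Let L be a finite chordal connected flag complex. If the right-angled Artin group A_L does not split as an amalgam over a clique subgroup distinct from the factors, then L is a simplex (and A_L is free abelian). Equivalently: if L is connected, chordal, and not a simplex, then A_L splits as an amalgamated free product A_{L₀} ∗_{A_K} A_{L₁} where K is a simplex in L and L₀, L₁ are proper induced subcomplexes covering L with L₀ ∩ L₁ = K. -/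
/-- Commutator relations of the right-angled Artin group of a simple graph. -/
def raagRels {V : Type*} (G : SimpleGraph V) : Set (FreeGroup V) :=
  {r | ∃ v w : V, G.Adj v w ∧
    r = FreeGroup.of v * FreeGroup.of w * (FreeGroup.of v)⁻¹ * (FreeGroup.of w)⁻¹}

/-- The right-angled Artin group of a simple graph (equivalently, of its flag complex). -/
abbrev RAAG {V : Type*} (G : SimpleGraph V) : Type _ :=
  PresentedGroup (raagRels G)

/-- A graph is chordal if it has no induced cycle of length greater than 3. -/
def IsChordalGraph {V : Type*} (G : SimpleGraph V) : Prop :=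
  ∀ n : ℕ, 4 ≤ n → IsEmpty (SimpleGraph.cycleGraph n ↪g G)

/-! A non-adjacent pair `a, b` has an inclusion-minimal separator `S`, which in a chordal graph
is a clique (Dirac). With `A` the component of `a` in `G - S`, the sets `L₀ = A ∪ S` and
`L₁ = Aᶜ` cover `G`, meet in `S`, and every edge lies in one of them; comparing the standard
presentations, `A_G` is then the amalgam of `A_{L₀}` and `A_{L₁}` over `A_S`. -/

namespace RAAG

variable {V : Type*} {G : SimpleGraph V}

theorem commute_of_adj {v w : V} (h : G.Adj v w) :
    Commute (PresentedGroup.of v : RAAG G) (PresentedGroup.of w) := by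
  have hrel : (PresentedGroup.of v * PresentedGroup.of w * (PresentedGroup.of v)⁻¹ *
      (PresentedGroup.of w)⁻¹ : RAAG G) = 1 :=
    (QuotientGroup.eq_one_iff _).mpr (Subgroup.subset_normalClosure ⟨v, w, h, rfl⟩)
  rwa [mul_inv_eq_one, mul_inv_eq_iff_eq_mul] at hrel

def lift {M : Type*} [Group M] (f : V → M) (hf : ∀ v w, G.Adj v w → Commute (f v) (f w)) :
    RAAG G →* M :=
  PresentedGroup.toGroup (f := f) <| by
    rintro r ⟨v, w, hvw, rfl⟩
    simp [(hf v w hvw).eq]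

@[simp]
theorem lift_of {M : Type*} [Group M] (f : V → M)
    (hf : ∀ v w, G.Adj v w → Commute (f v) (f w)) (v : V) :
    lift f hf (PresentedGroup.of v) = f v :=
  PresentedGroup.toGroup.of _

def inclusion {s t : Set V} (h : s ⊆ t) : RAAG (G.induce s) →* RAAG (G.induce t) :=
  lift (fun x => PresentedGroup.of ⟨x, h x.2⟩) fun _ _ hvw => commute_of_adj hvw

def subtype (s : Set V) : RAAG (G.induce s) →* RAAG G :=
  lift (fun x => PresentedGroup.of (x : V)) fun _ _ hvw => commute_of_adj hvw

theorem subtype_comp_inclusion {s t : Set V} (h : s ⊆ t) :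
    (subtype t).comp (inclusion (G := G) h) = subtype s :=
  PresentedGroup.ext fun _ => by simp [subtype, inclusion]

variable {ι : Type*} {L : ι → Set V} {K : Set V}

/-- A vertex lying in two factors lies in `K`, whose copies are identified in the amalgam. -/
theorem pushoutI_of_of_eq (hK : ∀ i, K ⊆ L i) (hL : ∀ i j, i ≠ j → L i ∩ L j ⊆ K) {v : V}
    {i j : ι} (hi : v ∈ L i) (hj : v ∈ L j) :
    Monoid.PushoutI.of (φ := fun i => inclusion (G := G) (hK i)) i (PresentedGroup.of ⟨v, hi⟩) =
      Monoid.PushoutI.of j (PresentedGroup.of ⟨v, hj⟩) := by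
  rcases eq_or_ne i j with rfl | hij
  · rfl
  have hv : v ∈ K := hL i j hij ⟨hi, hj⟩
  have hincl : ∀ k (hk : v ∈ L k), (PresentedGroup.of ⟨v, hk⟩ : RAAG (G.induce (L k))) =
      inclusion (hK k) (PresentedGroup.of ⟨v, hv⟩) := fun k hk => by simp [inclusion]
  rw [hincl i hi, hincl j hj, Monoid.PushoutI.of_apply_eq_base, Monoid.PushoutI.of_apply_eq_base]

theorem nonempty_mulEquiv_pushoutI (hK : ∀ i, K ⊆ L i) (hL : ∀ i j, i ≠ j → L i ∩ L j ⊆ K)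
    (hcover : ∀ v, ∃ i, v ∈ L i) (hedge : ∀ v w, G.Adj v w → ∃ i, v ∈ L i ∧ w ∈ L i) :
    Nonempty (RAAG G ≃* Monoid.PushoutI fun i => inclusion (G := G) (hK i)) := by
  set φ := fun i => inclusion (G := G) (hK i)
  let F : V → Monoid.PushoutI φ := fun v =>
    Monoid.PushoutI.of (hcover v).choose (PresentedGroup.of ⟨v, (hcover v).choose_spec⟩)
  have hF : ∀ v i (hi : v ∈ L i), F v = Monoid.PushoutI.of i (PresentedGroup.of ⟨v, hi⟩) :=
    fun v _ hi => pushoutI_of_of_eq hK hL _ hi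
  let Θ : RAAG G →* Monoid.PushoutI φ := lift F fun v w hvw => by
    obtain ⟨i, hv, hw⟩ := hedge v w hvw
    rw [hF v i hv, hF w i hw]
    exact (commute_of_adj (G := G.induce (L i)) (v := ⟨v, hv⟩) (w := ⟨w, hw⟩) hvw).map _
  let Ψ : Monoid.PushoutI φ →* RAAG G :=
    Monoid.PushoutI.lift (fun i => subtype (L i)) (subtype K) fun i => subtype_comp_inclusion _
  have hΘΨ : ∀ i (y : L i), Θ (Ψ (Monoid.PushoutI.of i (PresentedGroup.of y))) =
      Monoid.PushoutI.of i (PresentedGroup.of y) := fun i y => by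
    simp [Θ, Ψ, subtype, hF y.1 i y.2]
  refine ⟨MonoidHom.toMulEquiv Θ Ψ ?_ ?_⟩
  · refine PresentedGroup.ext fun v => ?_
    simp [Θ, Ψ, F, subtype]
  · refine Monoid.PushoutI.hom_ext (fun i => PresentedGroup.ext fun y => hΘΨ i y)
      (PresentedGroup.ext fun x => ?_)
    obtain ⟨i, -⟩ := hcover x
    have hφ : φ i (PresentedGroup.of x) = PresentedGroup.of ⟨x, hK i x.2⟩ := lift_of _ _ _
    simpa only [MonoidHom.comp_apply, MonoidHom.id_apply, ← Monoid.PushoutI.of_apply_eq_base φ i,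
      hφ] using hΘΨ i _

theorem exists_pushoutI_of_union_eq_univ (L₀ L₁ : Set V) (hcover : L₀ ∪ L₁ = Set.univ)
    (hedge : ∀ v w, G.Adj v w → (v ∈ L₀ ∧ w ∈ L₀) ∨ (v ∈ L₁ ∧ w ∈ L₁)) :
    ∃ φ : ∀ i : Fin 2, RAAG (G.induce (L₀ ∩ L₁)) →* RAAG (G.induce (if i = 0 then L₀ else L₁)),
      (∀ (i : Fin 2) (x : ↥(L₀ ∩ L₁)) (hx : (x : V) ∈ (if i = 0 then L₀ else L₁)),
        φ i (PresentedGroup.of x) =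
          PresentedGroup.of (⟨(x : V), hx⟩ : ↥(if i = 0 then L₀ else L₁))) ∧
      Nonempty (RAAG G ≃* Monoid.PushoutI φ) := by
  set L : Fin 2 → Set V := fun i => if i = 0 then L₀ else L₁
  have hK : ∀ i, L₀ ∩ L₁ ⊆ L i := by
    intro i
    fin_cases i
    exacts [Set.inter_subset_left, Set.inter_subset_right]
  refine ⟨fun i => inclusion (hK i), fun i x hx => lift_of _ _ _,
    nonempty_mulEquiv_pushoutI hK (fun i j hij => ?_) (fun v => ?_) (fun v w hvw => ?_)⟩
  · fin_cases i <;> fin_cases j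
    exacts [absurd rfl hij, subset_rfl, Set.inter_comm _ _ ▸ subset_rfl, absurd rfl hij]
  · rcases (Set.eq_univ_iff_forall.mp hcover v) with hv | hv
    exacts [⟨0, hv⟩, ⟨1, hv⟩]
  · rcases hedge v w hvw with h | h
    exacts [⟨0, h⟩, ⟨1, h⟩]

end RAAG

namespace SimpleGraph

variable {V : Type*} {G : SimpleGraph V} {S : Set V} {a b c u v x y : V}

theorem cycleGraph_adj_iff_of_lt {n : ℕ} {i j : Fin n} (hij : i < j) :
    (cycleGraph n).Adj i j ↔ (j : ℕ) = i + 1 ∨ ((i : ℕ) = 0 ∧ (j : ℕ) = n - 1) := by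
  rw [cycleGraph_adj', Fin.coe_sub_iff_lt.mpr hij, Fin.sub_val_of_le hij.le]
  have := j.isLt
  omega

theorem nonempty_cycleGraph_embedding {n : ℕ} (f : ℕ → V)
    (hinj : ∀ i j, i < j → j < n → f i ≠ f j)
    (hadj : ∀ i j, i < j → j < n → (G.Adj (f i) (f j) ↔ j = i + 1 ∨ (i = 0 ∧ j = n - 1))) :
    Nonempty (cycleGraph n ↪g G) := by
  have key : ∀ i j : Fin n, i < j → (G.Adj (f i) (f j) ↔ (cycleGraph n).Adj i j) :=
    fun i j hij => (hadj i j hij j.isLt).trans (cycleGraph_adj_iff_of_lt hij).symm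
  refine ⟨⟨⟨fun i => f i, fun i j hfij => ?_⟩, fun {i j} => ?_⟩⟩
  · by_contra hne
    rcases lt_or_gt_of_ne hne with h | h
    · exact hinj i j h j.isLt hfij
    · exact hinj j i h i.isLt hfij.symm
  · rcases lt_trichotomy i j with h | rfl | h
    · exact key i j h
    · simp
    · rw [G.adj_comm, (cycleGraph n).adj_comm]
      exact key j i h

namespace Walk

def IsInducedPath (p : G.Walk u v) : Prop :=
  p.IsPath ∧ ∀ i j, i + 1 < j → j ≤ p.length → ¬ G.Adj (p.getVert i) (p.getVert j)

theorem IsInducedPath.adj_getVert_iff {p : G.Walk u v} (hp : p.IsInducedPath) {i j : ℕ}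
    (hij : i < j) (hj : j ≤ p.length) :
    G.Adj (p.getVert i) (p.getVert j) ↔ j = i + 1 := by
  refine ⟨fun h => ?_, fun h => h ▸ p.adj_getVert_succ (by omega)⟩
  by_contra hne
  exact hp.2 i j (by omega) hj h

theorem IsInducedPath.getVert_injOn {p : G.Walk u v} (hp : p.IsInducedPath) {i j : ℕ}
    (hi : i ≤ p.length) (hj : j ≤ p.length) (h : p.getVert i = p.getVert j) : i = j :=
  hp.1.getVert_injOn hi hj h

theorem exists_shorter_of_adj_getVert (p : G.Walk u v) {i j : ℕ} (hij : i + 1 < j)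
    (hj : j ≤ p.length) (h : G.Adj (p.getVert i) (p.getVert j)) :
    ∃ q : G.Walk u v, q.length < p.length ∧ q.support ⊆ p.support := by
  refine ⟨(p.take i).append (cons h (p.drop j)), ?_, fun z hz => ?_⟩
  · simp only [length_append, take_length, length_cons, drop_length]
    omega
  · rw [mem_support_append_iff, support_cons, List.mem_cons] at hz
    rcases hz with hz | rfl | hz
    · exact (isSubwalk_take p i).support_subset hz
    · exact (isSubwalk_take p i).support_subset (end_mem_support _)
    · exact (isSubwalk_drop p j).support_subset hz

/-- A shortest path inside a vertex set `T` is an induced path. -/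
theorem exists_isInducedPath_support_subset (p : G.Walk u v) {T : Set V}
    (hp : ∀ z ∈ p.support, z ∈ T) :
    ∃ q : G.Walk u v, q.IsInducedPath ∧ ∀ z ∈ q.support, z ∈ T := by
  classical
  obtain ⟨q, ⟨hqpath, hqT⟩, hmin⟩ := (measure fun q : G.Walk u v => q.length).wf.has_min
    {q | q.IsPath ∧ ∀ z ∈ q.support, z ∈ T}
    ⟨p.bypass, p.bypass_isPath, fun z hz => hp z (p.support_bypass_subset_support hz)⟩
  refine ⟨q, ⟨hqpath, fun i j hij hj hadj => ?_⟩, hqT⟩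
  obtain ⟨r, hrq, hrsub⟩ := q.exists_shorter_of_adj_getVert hij hj hadj
  exact hmin r.bypass
    ⟨r.bypass_isPath, fun z hz => hqT z (hrsub (r.support_bypass_subset_support hz))⟩
    (r.length_bypass_le_length.trans_lt hrq)

theorem two_le_length_of_not_adj {x y : V} (p : G.Walk x y) (hxy : x ≠ y) (h : ¬ G.Adj x y) :
    2 ≤ p.length :=
  (p.reachable.one_lt_dist_of_ne_of_not_adj hxy h).trans_le (dist_le p)

theorem IsInducedPath.nonempty_cycleGraph_embedding {x y : V} {p q : G.Walk x y}
    (hp : p.IsInducedPath) (hq : q.IsInducedPath) (hxy : x ≠ y) (hnadj : ¬ G.Adj x y)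
    (hpq : ∀ i k, 0 < i → i < p.length → 0 < k → k < q.length →
      p.getVert i ≠ q.getVert k ∧ ¬ G.Adj (p.getVert i) (q.getVert k)) :
    Nonempty (cycleGraph (p.length + q.length) ↪g G) := by
  have hm := p.two_le_length_of_not_adj hxy hnadj
  have hm' := q.two_le_length_of_not_adj hxy hnadj
  set m := p.length
  set n := m + q.length
  have hstart : p.getVert 0 = q.getVert 0 := by simp
  have hend : p.getVert m = q.getVert q.length := by simp [m]
  refine SimpleGraph.nonempty_cycleGraph_embedding
    (fun i => if i ≤ m then p.getVert i else q.getVert (n - i))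
    (fun i j hij hjn => ?_) (fun i j hij hjn => ?_)
  · by_cases hj : j ≤ m
    · simp only [if_pos hj, if_pos (hij.le.trans hj)]
      exact fun h => hij.ne (hp.getVert_injOn (by omega) hj h)
    by_cases hi : m < i
    · simp only [if_neg hj, if_neg (not_le.2 hi)]
      exact fun h => by have := hq.getVert_injOn (by omega) (by omega) h; omega
    simp only [if_neg hj, if_pos (not_lt.1 hi)]
    rcases (show i = 0 ∨ i = m ∨ (0 < i ∧ i < m) by omega) with rfl | rfl | ⟨hi0, him⟩
    · rw [hstart]
      exact fun h => by have := hq.getVert_injOn (by omega) (by omega) h; omega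
    · rw [hend]
      exact fun h => by have := hq.getVert_injOn (by omega) (by omega) h; omega
    · exact (hpq i (n - j) hi0 him (by omega) (by omega)).1
  · by_cases hj : j ≤ m
    · simp only [if_pos hj, if_pos (hij.le.trans hj), hp.adj_getVert_iff hij hj]
      omega
    by_cases hi : m < i
    · simp only [if_neg hj, if_neg (not_le.2 hi)]
      rw [G.adj_comm, hq.adj_getVert_iff (by omega) (by omega)]
      omega
    simp only [if_neg hj, if_pos (not_lt.1 hi)]
    rcases (show i = 0 ∨ i = m ∨ (0 < i ∧ i < m) by omega) with rfl | rfl | ⟨hi0, him⟩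
    · rw [hstart, hq.adj_getVert_iff (by omega) (by omega)]
      omega
    · rw [hend, G.adj_comm, hq.adj_getVert_iff (by omega) le_rfl]
      omega
    · simp only [(hpq i (n - j) hi0 him (by omega) (by omega)).2, false_iff]
      omega

end Walk

variable (G) in
def componentAvoiding (S : Set V) (c : V) : Set V :=
  {v | ∃ w : G.Walk c v, ∀ z ∈ w.support, z ∉ S}

theorem notMem_of_mem_componentAvoiding (h : v ∈ G.componentAvoiding S c) : v ∉ S := by
  obtain ⟨w, hw⟩ := h
  exact hw v w.end_mem_support

theorem self_mem_componentAvoiding (hc : c ∉ S) : c ∈ G.componentAvoiding S c :=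
  ⟨.nil, by simpa using hc⟩

theorem mem_componentAvoiding_of_adj (hv : v ∈ G.componentAvoiding S c) (hadj : G.Adj v u)
    (hu : u ∉ S) : u ∈ G.componentAvoiding S c := by
  obtain ⟨w, hw⟩ := hv
  refine ⟨w.concat hadj, fun z hz => ?_⟩
  rw [Walk.support_concat, List.mem_append, List.mem_singleton] at hz
  rcases hz with hz | rfl
  exacts [hw z hz, hu]

theorem mem_componentAvoiding_of_mem_support (w : G.Walk c v) (hw : ∀ z ∈ w.support, z ∉ S)
    (hu : u ∈ w.support) : u ∈ G.componentAvoiding S c := by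
  classical
  exact ⟨w.takeUntil u hu, fun z hz => hw z (w.support_takeUntil_subset_support hu hz)⟩

variable (G) in
def Separates (S : Set V) (a b : V) : Prop :=
  a ∉ S ∧ b ∉ S ∧ ∀ w : G.Walk a b, ∃ z ∈ w.support, z ∈ S

theorem separates_comm : G.Separates S a b ↔ G.Separates S b a := by
  refine ⟨fun ⟨ha, hb, h⟩ => ⟨hb, ha, fun w => ?_⟩, fun ⟨hb, ha, h⟩ => ⟨ha, hb, fun w => ?_⟩⟩ <;>
  simpa using h w.reverse

theorem separates_compl_pair (hab : a ≠ b) (hnadj : ¬ G.Adj a b) : G.Separates {a, b}ᶜ a b := by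
  refine ⟨by simp, by simp, fun w => ⟨w.snd, w.getVert_mem_support 1, ?_⟩⟩
  have hsnd := w.adj_snd (Walk.not_nil_of_ne hab)
  simp only [Set.mem_compl_iff, Set.mem_insert_iff, Set.mem_singleton_iff, not_or]
  exact ⟨hsnd.ne', fun h => hnadj (h ▸ hsnd)⟩

namespace Separates

theorem notMem_componentAvoiding (hS : G.Separates S a b) : b ∉ G.componentAvoiding S a := by
  rintro ⟨w, hw⟩
  obtain ⟨z, hz, hzS⟩ := hS.2.2 w
  exact hw z hz hzS

theorem ne_of_mem_componentAvoiding (hS : G.Separates S a b) (hu : u ∈ G.componentAvoiding S a)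
    (hv : v ∈ G.componentAvoiding S b) : u ≠ v := by
  rintro rfl
  obtain ⟨w₁, hw₁⟩ := hu
  obtain ⟨w₂, hw₂⟩ := hv
  obtain ⟨z, hz, hzS⟩ := hS.2.2 (w₁.append w₂.reverse)
  rw [Walk.mem_support_append_iff, Walk.support_reverse, List.mem_reverse] at hz
  rcases hz with hz | hz
  exacts [hw₁ z hz hzS, hw₂ z hz hzS]

theorem not_adj_of_mem_componentAvoiding (hS : G.Separates S a b)
    (hu : u ∈ G.componentAvoiding S a) (hv : v ∈ G.componentAvoiding S b) : ¬ G.Adj u v :=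
  fun hadj => hS.ne_of_mem_componentAvoiding
    (mem_componentAvoiding_of_adj hu hadj (notMem_of_mem_componentAvoiding hv)) hv rfl

/-- If `S \ {x}` does not separate, some `a`–`b` walk meets `S` only in `x`; where it first
leaves the component of `a` it steps onto `x`. -/
theorem exists_adj_mem_componentAvoiding (hS : G.Separates S a b)
    (hs : ¬ G.Separates (S \ {x}) a b) :
    ∃ u, G.Adj u x ∧ u ∈ G.componentAvoiding S a := by
  obtain ⟨w, hw⟩ : ∃ w : G.Walk a b, ∀ z ∈ w.support, z ∉ S \ {x} := by
    simpa [Separates, hS.1, hS.2.1] using hs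
  obtain ⟨d, hd, hfst, hsnd⟩ := w.exists_boundary_dart _
    (self_mem_componentAvoiding hS.1) hS.notMem_componentAvoiding
  have hdx : d.snd = x := by
    by_contra hne
    exact hsnd (mem_componentAvoiding_of_adj hfst d.adj
      fun h => hw _ (w.dart_snd_mem_support_of_mem_darts hd) ⟨h, hne⟩)
  exact ⟨d.fst, hdx ▸ d.adj, hfst⟩

theorem exists_walk_of_minimal (hS : Minimal (G.Separates · a b) S) (hx : x ∈ S) (hy : y ∈ S) :
    ∃ w : G.Walk x y, ∀ z ∈ w.support, z = x ∨ z = y ∨ z ∈ G.componentAvoiding S a := by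
  have hnbr : ∀ s ∈ S, ∃ u, G.Adj u s ∧ u ∈ G.componentAvoiding S a := fun s hs =>
    hS.prop.exists_adj_mem_componentAvoiding
      (hS.not_prop_of_lt (Set.sdiff_singleton_ssubset.mpr hs))
  obtain ⟨u, hux, ⟨w₁, hw₁⟩⟩ := hnbr x hx
  obtain ⟨u', hu'y, ⟨w₂, hw₂⟩⟩ := hnbr y hy
  refine ⟨.cons hux.symm ((w₁.reverse.append w₂).concat hu'y), fun z hz => ?_⟩
  simp only [Walk.support_cons, Walk.support_concat, List.mem_cons, List.mem_append,
    Walk.mem_support_append_iff, Walk.support_reverse, List.mem_reverse, List.not_mem_nil,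
    or_false] at hz
  rcases hz with rfl | (hz | hz) | rfl
  · exact .inl rfl
  · exact .inr (.inr (mem_componentAvoiding_of_mem_support w₁ hw₁ hz))
  · exact .inr (.inr (mem_componentAvoiding_of_mem_support w₂ hw₂ hz))
  · exact .inr (.inl rfl)

theorem exists_isInducedPath_of_minimal (hS : Minimal (G.Separates · a b) S) (hx : x ∈ S)
    (hy : y ∈ S) : ∃ p : G.Walk x y, p.IsInducedPath ∧
      ∀ i, 0 < i → i < p.length → p.getVert i ∈ G.componentAvoiding S a := by
  obtain ⟨w, hw⟩ := exists_walk_of_minimal hS hx hy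
  obtain ⟨p, hp, hpT⟩ := w.exists_isInducedPath_support_subset hw
  refine ⟨p, hp, fun i hi0 hilt => ?_⟩
  rcases hpT _ (p.getVert_mem_support i) with h | h | h
  · exact absurd (hp.getVert_injOn hilt.le (Nat.zero_le _) (h.trans p.getVert_zero.symm)) hi0.ne'
  · exact absurd (hp.getVert_injOn hilt.le le_rfl (h.trans p.getVert_length.symm)) hilt.ne
  · exact h

/-- Two non-adjacent vertices of `S` would be joined by induced paths through the components of
`a` and of `b`, which together form an induced cycle of length at least four. -/
theorem isClique_of_minimal (hG : IsChordalGraph G) (hS : Minimal (G.Separates · a b) S) :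
    G.IsClique S := by
  intro x hx y hy hxy
  by_contra hnadj
  have hS' : Minimal (G.Separates · b a) S := by simpa only [separates_comm] using hS
  obtain ⟨p, hp, hpa⟩ := exists_isInducedPath_of_minimal hS hx hy
  obtain ⟨q, hq, hqb⟩ := exists_isInducedPath_of_minimal hS' hx hy
  obtain ⟨e⟩ := hp.nonempty_cycleGraph_embedding hq hxy hnadj fun i k hi0 hi hk0 hk =>
    ⟨hS.prop.ne_of_mem_componentAvoiding (hpa i hi0 hi) (hqb k hk0 hk),
      hS.prop.not_adj_of_mem_componentAvoiding (hpa i hi0 hi) (hqb k hk0 hk)⟩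
  have h4 : 4 ≤ p.length + q.length := by
    have := p.two_le_length_of_not_adj hxy hnadj
    have := q.two_le_length_of_not_adj hxy hnadj
    omega
  exact (hG _ h4).false e

end Separates

theorem Separates.exists_cover (hS : G.Separates S a b) :
    ∃ L₀ L₁ : Set V, L₀ ∩ L₁ = S ∧ L₀ ∪ L₁ = Set.univ ∧ L₀ ≠ Set.univ ∧ L₁ ≠ Set.univ ∧
      ∀ v w, G.Adj v w → (v ∈ L₀ ∧ w ∈ L₀) ∨ (v ∈ L₁ ∧ w ∈ L₁) := by
  set A := G.componentAvoiding S a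
  have hA : ∀ v w, G.Adj v w → v ∈ A → w ∈ A ∪ S := fun v w hvw hv => by
    by_cases hw : w ∈ S
    exacts [.inr hw, .inl (mem_componentAvoiding_of_adj hv hvw hw)]
  refine ⟨A ∪ S, Aᶜ, ?_, by rw [Set.union_right_comm, Set.union_compl_self, Set.univ_union],
    ?_, ?_, fun v w hvw => ?_⟩
  · rw [Set.union_inter_distrib_right, Set.inter_compl_self, Set.empty_union,
      Set.inter_eq_left]
    exact fun v hv hvA => notMem_of_mem_componentAvoiding hvA hv
  · intro h
    rcases (h ▸ Set.mem_univ b : b ∈ A ∪ S) with hb | hb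
    exacts [hS.notMem_componentAvoiding hb, hS.2.1 hb]
  · exact fun h => (h ▸ Set.mem_univ a : a ∈ Aᶜ) (self_mem_componentAvoiding hS.1)
  · by_cases hv : v ∈ A
    · exact .inl ⟨.inl hv, hA v w hvw hv⟩
    by_cases hw : w ∈ A
    · exact .inl ⟨hA w v hvw.symm hw, .inl hw⟩
    · exact .inr ⟨hv, hw⟩

theorem _root_.IsChordalGraph.exists_clique_cover [Finite V] (hG : IsChordalGraph G) (hab : a ≠ b)
    (hnadj : ¬ G.Adj a b) :
    ∃ L₀ L₁ : Set V, G.IsClique (L₀ ∩ L₁) ∧ L₀ ∪ L₁ = Set.univ ∧ L₀ ≠ Set.univ ∧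
      L₁ ≠ Set.univ ∧ ∀ v w, G.Adj v w → (v ∈ L₀ ∧ w ∈ L₀) ∨ (v ∈ L₁ ∧ w ∈ L₁) := by
  obtain ⟨S, -, hS⟩ := exists_minimal_le_of_wellFoundedLT (G.Separates · a b) _
    (separates_compl_pair hab hnadj)
  obtain ⟨L₀, L₁, hK, hL⟩ := hS.prop.exists_cover
  exact ⟨L₀, L₁, hK ▸ Separates.isClique_of_minimal hG hS, hL⟩

end SimpleGraph

theorem raag_chordal_splits_over_simplex_general {V : Type*} [Fintype V]
    (G : SimpleGraph V) (hchordal : IsChordalGraph G)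
    (hnotsimplex : ∃ a b : V, a ≠ b ∧ ¬ G.Adj a b) :
    ∃ L₀ L₁ : Set V,
      G.IsClique (L₀ ∩ L₁) ∧
      L₀ ∪ L₁ = Set.univ ∧ L₀ ≠ Set.univ ∧ L₁ ≠ Set.univ ∧
      (∀ a b : V, G.Adj a b → (a ∈ L₀ ∧ b ∈ L₀) ∨ (a ∈ L₁ ∧ b ∈ L₁)) ∧
      ∃ φ : ∀ i : Fin 2, RAAG (G.induce (L₀ ∩ L₁)) →*
              RAAG (G.induce (if i = 0 then L₀ else L₁)),
        (∀ (i : Fin 2) (x : ↥(L₀ ∩ L₁)) (hx : (x : V) ∈ (if i = 0 then L₀ else L₁)),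
          φ i (PresentedGroup.of x) =
            PresentedGroup.of (⟨(x : V), hx⟩ : ↥(if i = 0 then L₀ else L₁))) ∧
        Nonempty (RAAG G ≃* Monoid.PushoutI φ) := by
  obtain ⟨a, b, hab, hnadj⟩ := hnotsimplex
  obtain ⟨L₀, L₁, hclique, hcover, h₀, h₁, hedge⟩ := hchordal.exists_clique_cover hab hnadj
  exact ⟨L₀, L₁, hclique, hcover, h₀, h₁, hedge,
    RAAG.exists_pushoutI_of_union_eq_univ L₀ L₁ hcover hedge⟩

/-- Let `L` be a finite connected chordal flag complex which is not a simplex (its graph is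
not complete).  Then `A_L` splits as an amalgamated free product
`A_{L₀} ∗_{A_K} A_{L₁}` where `K = L₀ ∩ L₁` is a simplex (a clique) and `L₀, L₁` are proper
induced subcomplexes covering `L`.  The amalgam is expressed as `Monoid.PushoutI` of the
parabolic inclusions `A_K →* A_{L₀}`, `A_K →* A_{L₁}` (which send standard generators to
standard generators). -/
theorem raag_chordal_splits_over_simplex {V : Type*} [Fintype V] [DecidableEq V]
    (G : SimpleGraph V) (hconn : G.Connected) (hchordal : IsChordalGraph G)
    (hnotsimplex : ∃ a b : V, a ≠ b ∧ ¬ G.Adj a b) :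
    ∃ L₀ L₁ : Set V,
      G.IsClique (L₀ ∩ L₁) ∧
      L₀ ∪ L₁ = Set.univ ∧ L₀ ≠ Set.univ ∧ L₁ ≠ Set.univ ∧
      (∀ a b : V, G.Adj a b → (a ∈ L₀ ∧ b ∈ L₀) ∨ (a ∈ L₁ ∧ b ∈ L₁)) ∧
      ∃ φ : ∀ i : Fin 2, RAAG (G.induce (L₀ ∩ L₁)) →*
              RAAG (G.induce (if i = 0 then L₀ else L₁)),
        (∀ (i : Fin 2) (x : ↥(L₀ ∩ L₁)) (hx : (x : V) ∈ (if i = 0 then L₀ else L₁)),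
          φ i (PresentedGroup.of x) =
            PresentedGroup.of (⟨(x : V), hx⟩ : ↥(if i = 0 then L₀ else L₁))) ∧
        Nonempty (RAAG G ≃* Monoid.PushoutI φ) :=
  raag_chordal_splits_over_simplex_general G hchordal hnotsimplex
end
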